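/- Let p = 2 and f, u ∈ Z_2[[x]] with f(0)=u(0)=0, f∘u=u∘f, Weierstrass degree of f equal to 2, v_2(f'(0))=1, u invertible nontorsion with v_2(u'(0)−1)=2. Let α be the nonzero root of f and β, β' the two roots of f(x)−α in an algebraic closure of Q_2. If γ₁, γ₂ are the roots of the Eisenstein quadratic over Z_2[β] obtained from the Weierstrass factorization of f(x)−β, then v_2(γ₂−γ₁) ∈ {1/2, 1, 5/4}. -/

import Mathlib

open PowerSeries Filter

noncomputable section

/-- Composition `f(g(x))` of formal power series (intended for `g` with zero constant term). -/
def compPS {R : Type*} [CommSemiring R] (f g : PowerSeries R) : PowerSeries R :=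
  PowerSeries.mk fun n =>
    ∑ k ∈ Finset.range (n + 1), PowerSeries.coeff k f * PowerSeries.coeff n (g ^ k)

/-- `n`-fold compositional iterate of a power series. -/
def iterPS {R : Type*} [CommSemiring R] (f : PowerSeries R) : ℕ → PowerSeries R
  | 0 => PowerSeries.X
  | n + 1 => compPS f (iterPS f n)

/-- Evaluation of a power series at a point of a normed field. -/
def evalT {R K : Type*} [CommSemiring R] [NormedField K] [Algebra R K]
    (f : PowerSeries R) (x : K) : K :=
  ∑' n : ℕ, algebraMap R K (PowerSeries.coeff n f) * x ^ n


/-!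
Since the coefficient of `X ^ 2` is a unit and all coefficients are integral, the second divided
difference of `f` at three distinct points of the open unit disc is a unit plus a term of norm
`< 1`, so `f` takes every value at most twice there (Strassmann). Hence `{0, α}`, `{β, β'}` and
`{γ₁, γ₂}` are full fibres of `f`. The Galois group of `K / ℚ₂` acts isometrically and commutes
with `f`, so it fixes `α`, permutes `{β, β'}`, and `s = γ₁ + γ₂` depends only on the image of `β`:
`s` has at most two conjugates, and `‖s‖ ^ 2` is the norm of an element of `ℚ₂`, an integral power
of `2` (or `s = 0`). Finally `(γ₂ - γ₁) ^ 2 = s ^ 2 - 4 γ₁ γ₂` with `‖4 γ₁ γ₂‖ ^ 2 = 2 ^ (-5)` an odd power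
of `2`, so the ultrametric inequality gives `‖γ₂ - γ₁‖ ^ 4 = max (‖s‖ ^ 4) (2 ^ (-5))`, and
`‖s‖ ^ 4 ≤ 2⁻¹` leaves the values `2 ^ (-2)`, `2 ^ (-4)`, `2 ^ (-5)`.
-/

open Topology Finset IntermediateField

theorem Submodule.summable_of_tendsto_zero {𝕜 V : Type*} [NontriviallyNormedField 𝕜]
    [CompleteSpace 𝕜] [NormedAddCommGroup V] [IsUltrametricDist V] [NormedSpace 𝕜 V]
    (E : Submodule 𝕜 V) [FiniteDimensional 𝕜 E] {u : ℕ → V} (hu : ∀ n, u n ∈ E)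
    (h : Tendsto u atTop (𝓝 0)) : Summable u := by
  have : CompleteSpace E := FiniteDimensional.complete 𝕜 E
  have hE : Tendsto (fun n => (⟨u n, hu n⟩ : E)) cofinite (𝓝 0) := by
    rw [Nat.cofinite_eq_atTop]
    exact tendsto_subtype_rng.2 h
  exact (NonarchimedeanAddGroup.summable_of_tendsto_cofinite_zero hE).map E.subtype
    continuous_subtype_val

section AlgebraicExtension

variable {𝕜 K : Type*} [NontriviallyNormedField 𝕜] [NormedField K] [NormedAlgebra 𝕜 K]
  [Algebra.IsAlgebraic 𝕜 K]

instance (x : K) : FiniteDimensional 𝕜 𝕜⟮x⟯.toSubmodule :=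
  adjoin.finiteDimensional (Algebra.IsIntegral.isIntegral x)

theorem AlgEquiv.norm_apply [CompleteSpace 𝕜] [IsUltrametricDist 𝕜] (σ : K ≃ₐ[𝕜] K) (x : K) :
    ‖σ x‖ = ‖x‖ := by
  rw [NormedAlgebra.norm_eq_spectralNorm 𝕜, NormedAlgebra.norm_eq_spectralNorm 𝕜,
    ← spectralNorm_eq_of_equiv]

end AlgebraicExtension

section CompleteHomogeneous

variable {R : Type*} [CommRing R]

/-- The complete homogeneous symmetric polynomial `∑_{i+j+k=n} x^i y^j z^k` of degree `n`. -/
def completeHomogeneous₃ (n : ℕ) (x y z : R) : R :=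
  ∑ i ∈ range (n + 1), x ^ i * ∑ j ∈ range (n + 1 - i), y ^ j * z ^ (n - i - j)

theorem completeHomogeneous₃_zero (x y z : R) : completeHomogeneous₃ 0 x y z = 1 := by
  simp [completeHomogeneous₃]

theorem sub_mul_completeHomogeneous₃ (n : ℕ) (x y z : R) :
    (y - z) * completeHomogeneous₃ n x y z =
      ∑ i ∈ range (n + 2), x ^ i * y ^ (n + 1 - i) -
        ∑ i ∈ range (n + 2), x ^ i * z ^ (n + 1 - i) := by
  rw [sum_range_succ _ (n + 1), sum_range_succ _ (n + 1), Nat.sub_self, pow_zero, pow_zero,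
    add_sub_add_right_eq_sub, ← sum_sub_distrib, completeHomogeneous₃, mul_sum]
  refine sum_congr rfl fun i _ => ?_
  rw [mul_left_comm, ← mul_sub, ← geom_sum₂_mul, mul_comm (y - z)]
  congr 3 with j
  congr 2
  omega

theorem mul_completeHomogeneous₃ (n : ℕ) (x y z : R) :
    (x - y) * (x - z) * (y - z) * completeHomogeneous₃ n x y z =
      (y - z) * x ^ (n + 2) - (x - z) * y ^ (n + 2) + (x - y) * z ^ (n + 2) := by
  have hy := geom_sum₂_mul x y (n + 2)
  have hz := geom_sum₂_mul x z (n + 2)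
  simp only [show n + 2 - 1 = n + 1 from rfl] at hy hz
  linear_combination (x - y) * (x - z) * sub_mul_completeHomogeneous₃ n x y z + (x - z) * hy -
    (x - y) * hz

end CompleteHomogeneous

section CompleteHomogeneousNorm

variable {R : Type*} [NormedCommRing R] [NormOneClass R]

theorem norm_pow_mul_pow_le {a b : R} {r : ℝ} (ha : ‖a‖ ≤ r) (hb : ‖b‖ ≤ r) (i j : ℕ) :
    ‖a ^ i * b ^ j‖ ≤ r ^ (i + j) := by
  have hr : 0 ≤ r := (norm_nonneg a).trans ha
  calc ‖a ^ i * b ^ j‖ ≤ ‖a‖ ^ i * ‖b‖ ^ j :=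
        (norm_mul_le _ _).trans (mul_le_mul (norm_pow_le a i) (norm_pow_le b j) (norm_nonneg _)
          (by positivity))
    _ ≤ r ^ i * r ^ j := by gcongr
    _ = r ^ (i + j) := (pow_add r i j).symm

theorem norm_completeHomogeneous₃_le [IsUltrametricDist R] {x y z : R} {r : ℝ} (hx : ‖x‖ ≤ r)
    (hy : ‖y‖ ≤ r) (hz : ‖z‖ ≤ r) (n : ℕ) : ‖completeHomogeneous₃ n x y z‖ ≤ r ^ n := by
  have hr : 0 ≤ r := (norm_nonneg x).trans hx
  refine IsUltrametricDist.norm_sum_le_of_forall_le_of_nonneg (by positivity) fun i hi => ?_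
  have hin : i ≤ n := Nat.lt_succ_iff.1 (mem_range.1 hi)
  have hinner : ‖∑ j ∈ range (n + 1 - i), y ^ j * z ^ (n - i - j)‖ ≤ r ^ (n - i) := by
    refine IsUltrametricDist.norm_sum_le_of_forall_le_of_nonneg (by positivity) fun j hj => ?_
    have hj : j ≤ n - i := by have := mem_range.1 hj; omega
    simpa only [Nat.add_sub_cancel' hj] using norm_pow_mul_pow_le hy hz j (n - i - j)
  calc ‖x ^ i * ∑ j ∈ range (n + 1 - i), y ^ j * z ^ (n - i - j)‖
      ≤ ‖x‖ ^ i * r ^ (n - i) :=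
        (norm_mul_le _ _).trans (mul_le_mul (norm_pow_le x i) hinner (norm_nonneg _)
          (by positivity))
    _ ≤ r ^ i * r ^ (n - i) := by gcongr
    _ = r ^ n := by rw [← pow_add, Nat.add_sub_cancel' hin]

end CompleteHomogeneousNorm

theorem evalT_zero {R K : Type*} [CommSemiring R] [NormedField K] [Algebra R K]
    (f : PowerSeries R) : evalT f (0 : K) = algebraMap R K (coeff 0 f) := by
  rw [evalT, tsum_eq_single 0 fun n hn => by simp [hn]]
  simp

section Evaluation

variable {p : ℕ} [Fact p.Prime] {K : Type*} [NormedField K] [NormedAlgebra ℚ_[p] K]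
  [Algebra ℤ_[p] K] [IsScalarTower ℤ_[p] ℚ_[p] K]

theorem norm_algebraMap_padicInt (c : ℤ_[p]) : ‖algebraMap ℤ_[p] K c‖ = ‖c‖ := by
  rw [IsScalarTower.algebraMap_apply ℤ_[p] ℚ_[p] K, norm_algebraMap', PadicInt.norm_def]
  rfl

theorem algebraMap_padicInt_mul_pow_mem_adjoin (c : ℤ_[p]) (x : K) (n : ℕ) :
    algebraMap ℤ_[p] K c * x ^ n ∈ ℚ_[p]⟮x⟯ := by
  rw [IsScalarTower.algebraMap_apply ℤ_[p] ℚ_[p] K]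
  exact mul_mem (IntermediateField.algebraMap_mem _ _)
    (pow_mem (mem_adjoin_simple_self ℚ_[p] x) n)

variable [Algebra.IsAlgebraic ℚ_[p] K] [IsUltrametricDist K] (f : PowerSeries ℤ_[p])

theorem hasSum_evalT {x : K} (hx : ‖x‖ < 1) :
    HasSum (fun n => algebraMap ℤ_[p] K (coeff n f) * x ^ n) (evalT f x) := by
  refine (ℚ_[p]⟮x⟯.toSubmodule.summable_of_tendsto_zero
    (fun n => algebraMap_padicInt_mul_pow_mem_adjoin _ x n) ?_).hasSum
  refine squeeze_zero_norm (fun n => ?_) (tendsto_pow_atTop_nhds_zero_of_lt_one (norm_nonneg x) hx)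
  rw [norm_mul, norm_pow, norm_algebraMap_padicInt]
  exact mul_le_of_le_one_left (by positivity) (PadicInt.norm_le_one _)

theorem evalT_algEquiv (σ : K ≃ₐ[ℚ_[p]] K) {x : K} (hx : ‖x‖ < 1) :
    evalT f (σ x) = σ (evalT f x) := by
  refine (hasSum_evalT f (by rwa [σ.norm_apply])).unique ?_
  have h := (hasSum_evalT f hx).map σ (AddMonoidHomClass.isometry_of_norm σ σ.norm_apply).continuous
  simpa only [Function.comp_def, map_mul, map_pow, AlgEquiv.commutes,
    IsScalarTower.algebraMap_apply ℤ_[p] ℚ_[p] K] using h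

end Evaluation

section Strassmann

variable {p : ℕ} [Fact p.Prime] {K : Type*} [NormedField K] [IsUltrametricDist K]
  [NormedAlgebra ℚ_[p] K] [Algebra.IsAlgebraic ℚ_[p] K] [Algebra ℤ_[p] K]
  [IsScalarTower ℤ_[p] ℚ_[p] K] (f : PowerSeries ℤ_[p])

-- The second divided difference of `f` at three points of one fibre vanishes.
theorem hasSum_coeff_mul_completeHomogeneous₃ {w x y z : K} (hx : ‖x‖ < 1) (hy : ‖y‖ < 1)
    (hz : ‖z‖ < 1) (hxy : x - y ≠ 0) (hxz : x - z ≠ 0) (hyz : y - z ≠ 0) (hfx : evalT f x = w)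
    (hfy : evalT f y = w) (hfz : evalT f z = w) :
    HasSum (fun n => algebraMap ℤ_[p] K (coeff (n + 2) f) * completeHomogeneous₃ n x y z) 0 := by
  set dd : ℕ → K := fun n =>
    x ^ n / ((x - y) * (x - z)) - y ^ n / ((x - y) * (y - z)) + z ^ n / ((x - z) * (y - z))
  have hdd0 : dd 0 = 0 := by
    simp only [dd]; field_simp; ring
  have hdd1 : dd 1 = 0 := by
    simp only [dd]; field_simp; ring
  have hdd : ∀ n, dd (n + 2) = completeHomogeneous₃ n x y z := by
    intro n
    have := mul_completeHomogeneous₃ n x y z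
    simp only [dd]
    field_simp
    linear_combination -this
  have hsum : HasSum (fun n => algebraMap ℤ_[p] K (coeff n f) * dd n) 0 := by
    have h := (((hasSum_evalT f hx).div_const ((x - y) * (x - z))).sub
      ((hasSum_evalT f hy).div_const ((x - y) * (y - z)))).add
      ((hasSum_evalT f hz).div_const ((x - z) * (y - z)))
    have hval :
        w / ((x - y) * (x - z)) - w / ((x - y) * (y - z)) + w / ((x - z) * (y - z)) = 0 := by
      field_simp; ring
    rw [hfx, hfy, hfz, hval] at h
    convert h using 2 with n
    · rfl
    · simp only [dd]
      ring
  simpa [sum_range_succ, hdd0, hdd1, hdd] using (hasSum_nat_add_iff' 2).2 hsum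

theorem eq_or_eq_of_evalT_eq (h2 : IsUnit (coeff 2 f)) {w x y z : K} (hx : ‖x‖ < 1)
    (hy : ‖y‖ < 1) (hz : ‖z‖ < 1) (hxy : x ≠ y) (hfx : evalT f x = w) (hfy : evalT f y = w)
    (hfz : evalT f z = w) : z = x ∨ z = y := by
  by_contra! hne
  obtain ⟨hzx, hzy⟩ := hne
  set a : ℕ → K := fun n => algebraMap ℤ_[p] K (coeff n f)
  have hshift := hasSum_coeff_mul_completeHomogeneous₃ f hx hy hz (sub_ne_zero.2 hxy)
    (sub_ne_zero.2 hzx.symm) (sub_ne_zero.2 hzy.symm) hfx hfy hfz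
  have ha2 : a 2 = -∑' n, a (n + 3) * completeHomogeneous₃ (n + 1) x y z := by
    rw [eq_neg_iff_add_eq_zero, ← hshift.tsum_eq, hshift.summable.tsum_eq_zero_add,
      completeHomogeneous₃_zero, mul_one]
  set r := max ‖x‖ (max ‖y‖ ‖z‖)
  have hr0 : 0 ≤ r := (norm_nonneg x).trans (le_max_left _ _)
  have hr1 : r < 1 := max_lt hx (max_lt hy hz)
  have htail : ‖∑' n, a (n + 3) * completeHomogeneous₃ (n + 1) x y z‖ ≤ r := by
    refine IsUltrametricDist.norm_tsum_le_of_forall_le_of_nonneg hr0 fun n => ?_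
    rw [norm_mul, norm_algebraMap_padicInt]
    calc ‖coeff (n + 3) f‖ * ‖completeHomogeneous₃ (n + 1) x y z‖ ≤ 1 * r ^ (n + 1) :=
          mul_le_mul (PadicInt.norm_le_one _)
            (norm_completeHomogeneous₃_le (le_max_left _ _)
              ((le_max_left _ _).trans (le_max_right _ _))
              ((le_max_right _ _).trans (le_max_right _ _)) (n + 1))
            (norm_nonneg _) zero_le_one
      _ ≤ r := by rw [one_mul]; exact pow_le_of_le_one hr0 hr1.le n.succ_ne_zero
  have hna2 : ‖a 2‖ = 1 := by
    rw [norm_algebraMap_padicInt, ← PadicInt.isUnit_iff]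
    exact h2
  rw [ha2, norm_neg] at hna2
  linarith

theorem add_eq_add_of_evalT_eq (h2 : IsUnit (coeff 2 f)) {w a b c d : K} (ha : ‖a‖ < 1)
    (hb : ‖b‖ < 1) (hc : ‖c‖ < 1) (hd : ‖d‖ < 1) (hab : a ≠ b) (hcd : c ≠ d)
    (hfa : evalT f a = w) (hfb : evalT f b = w) (hfc : evalT f c = w) (hfd : evalT f d = w) :
    c + d = a + b := by
  rcases eq_or_eq_of_evalT_eq f h2 ha hb hc hab hfa hfb hfc with rfl | rfl <;>
    rcases eq_or_eq_of_evalT_eq f h2 ha hb hd hab hfa hfb hfd with rfl | rfl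
  exacts [absurd rfl hcd, rfl, add_comm _ _, absurd rfl hcd]

theorem algEquiv_apply_eq_or_eq_of_evalT_eq (h2 : IsUnit (coeff 2 f)) {w x y z : K}
    (hx : ‖x‖ < 1) (hy : ‖y‖ < 1) (hz : ‖z‖ < 1) (hxy : x ≠ y) (hfx : evalT f x = w)
    (hfy : evalT f y = w) (hfz : evalT f z = w) (σ : K ≃ₐ[ℚ_[p]] K) (hσ : σ w = w) :
    σ z = x ∨ σ z = y :=
  eq_or_eq_of_evalT_eq f h2 hx hy (by rwa [σ.norm_apply]) hxy hfx hfy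
    (by rw [evalT_algEquiv f σ hz, hfz, hσ])

theorem algEquiv_add_eq_of_evalT_eq (h2 : IsUnit (coeff 2 f)) {w x y : K} (hx : ‖x‖ < 1)
    (hy : ‖y‖ < 1) (hxy : x ≠ y) (hfx : evalT f x = w) (hfy : evalT f y = w)
    (σ τ : K ≃ₐ[ℚ_[p]] K) (hστ : σ w = τ w) : σ (x + y) = τ (x + y) := by
  rw [map_add, map_add]
  refine add_eq_add_of_evalT_eq f h2 (w := τ w) (by rwa [τ.norm_apply]) (by rwa [τ.norm_apply])
    (by rwa [σ.norm_apply]) (by rwa [σ.norm_apply]) (τ.injective.ne hxy) (σ.injective.ne hxy)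
    ?_ ?_ ?_ ?_ <;>
  simp only [evalT_algEquiv f _ hx, evalT_algEquiv f _ hy, hfx, hfy, hστ]

end Strassmann

section Galois

theorem exists_forall_algEquiv_apply_eq_or_eq {F L : Type*} [CommSemiring F] [Semiring L]
    [Algebra F L] {b b' s : L} (hb : ∀ σ : L ≃ₐ[F] L, σ b = b ∨ σ b = b')
    (hs : ∀ σ τ : L ≃ₐ[F] L, σ b = τ b → σ s = τ s) :
    ∃ s', ∀ σ : L ≃ₐ[F] L, σ s = s ∨ σ s = s' := by
  by_cases hmove : ∃ σ₀ : L ≃ₐ[F] L, σ₀ b = b'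
  · obtain ⟨σ₀, hσ₀⟩ := hmove
    refine ⟨σ₀ s, fun σ => (hb σ).imp (fun h => hs σ 1 h) (fun h => hs σ σ₀ (h.trans hσ₀.symm))⟩
  · push Not at hmove
    exact ⟨s, fun σ => Or.inl (hs σ 1 ((hb σ).resolve_right (hmove σ)))⟩

variable {p : ℕ} [Fact p.Prime] {K : Type*} [NormedField K] [NormedAlgebra ℚ_[p] K]
  [IsGalois ℚ_[p] K]

-- Either `x` is fixed, or `x * y` is fixed and `‖y‖ = ‖x‖`.
theorem exists_norm_sq_eq_norm_padic {x y : K} (h : ∀ σ : K ≃ₐ[ℚ_[p]] K, σ x = x ∨ σ x = y) :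
    ∃ c : ℚ_[p], ‖x‖ ^ 2 = ‖c‖ := by
  by_cases hfix : ∀ σ : K ≃ₐ[ℚ_[p]] K, σ x = x
  · obtain ⟨c, hc⟩ := (InfiniteGalois.mem_range_algebraMap_iff_fixed (x ^ 2)).2
      fun σ => by rw [map_pow, hfix]
    exact ⟨c, by rw [← norm_pow, ← hc, norm_algebraMap']⟩
  push Not at hfix
  obtain ⟨σ₀, hσ₀⟩ := hfix
  have hy : σ₀ x = y := (h σ₀).resolve_left hσ₀
  have hxy : ∀ σ : K ≃ₐ[ℚ_[p]] K, σ (x * y) = x * y := by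
    intro σ
    have hσy : σ y = (σ * σ₀) x := by rw [AlgEquiv.mul_apply, hy]
    have hne : σ x ≠ σ y := σ.injective.ne (hy ▸ Ne.symm hσ₀)
    rw [hσy] at hne
    rw [map_mul, hσy]
    rcases h σ with h1 | h1 <;> rcases h (σ * σ₀) with h2 | h2 <;> rw [h1, h2] at hne ⊢
    exacts [absurd rfl hne, mul_comm y x, absurd rfl hne]
  obtain ⟨c, hc⟩ := (InfiniteGalois.mem_range_algebraMap_iff_fixed (x * y)).2 hxy
  refine ⟨c, ?_⟩
  rw [← norm_algebraMap' K c, hc, norm_mul, ← hy, σ₀.norm_apply, sq]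

end Galois

theorem sq_norm_sq_sub_eq_two_zpow {K : Type*} [NormedField K] [IsUltrametricDist K] {s c : K}
    {q : ℚ_[2]} (hs : ‖s‖ ^ 2 = ‖q‖) (hs4 : ‖s‖ ^ 4 ≤ 2⁻¹) (hc : ‖c‖ ^ 2 = 2 ^ (-5 : ℤ)) :
    ‖s ^ 2 - c‖ ^ 2 = 2 ^ (-2 : ℤ) ∨ ‖s ^ 2 - c‖ ^ 2 = 2 ^ (-4 : ℤ) ∨
      ‖s ^ 2 - c‖ ^ 2 = 2 ^ (-5 : ℤ) := by
  rcases eq_or_ne q 0 with rfl | hq0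
  · rw [norm_zero, ← norm_pow, norm_eq_zero] at hs
    simp [hs, hc]
  set m : ℤ := -q.valuation
  have hm : ‖s ^ 2‖ = 2 ^ m := by
    rw [norm_pow, hs, Padic.norm_eq_zpow_neg_valuation hq0]
    norm_cast
  have hsq : ‖s ^ 2‖ ^ 2 = 2 ^ (2 * m) := by rw [hm, ← zpow_natCast, ← zpow_mul, mul_comm]; rfl
  have hm1 : 2 * m ≤ -1 := by
    rw [← zpow_le_zpow_iff_right₀ (by norm_num : (1 : ℝ) < 2), ← hsq, norm_pow, ← pow_mul]
    simpa using hs4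
  have hne : ‖s ^ 2‖ ≠ ‖c‖ := by
    intro h
    have := zpow_right_injective₀ (by norm_num : (0 : ℝ) < 2) (by norm_num)
      (hsq.symm.trans (h ▸ hc))
    omega
  have hc0 : 0 ≤ ‖c‖ := norm_nonneg c
  rw [sub_eq_add_neg, IsUltrametricDist.norm_add_eq_max_of_norm_ne_norm (by rwa [norm_neg]),
    norm_neg]
  rcases le_or_gt m (-3) with h3 | h3
  · have hlt : ‖s ^ 2‖ ≤ ‖c‖ := by
      rw [← pow_le_pow_iff_left₀ (norm_nonneg _) hc0 two_ne_zero, hsq, hc]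
      exact zpow_le_zpow_right₀ (by norm_num) (by omega)
    rw [max_eq_right hlt, hc]
    exact Or.inr (Or.inr rfl)
  · have hgt : ‖c‖ ≤ ‖s ^ 2‖ := by
      rw [← pow_le_pow_iff_left₀ hc0 (norm_nonneg _) two_ne_zero, hsq, hc]
      exact zpow_le_zpow_right₀ (by norm_num) (by omega)
    rw [max_eq_left hgt, hsq]
    obtain h | h : 2 * m = -2 ∨ 2 * m = -4 := by omega
    · exact Or.inl (by rw [h])
    · exact Or.inr (Or.inl (by rw [h]))

theorem norm_sub_pow_four_eq_two_zpow {K : Type*} [NormedField K] [IsUltrametricDist K]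
    [NormedAlgebra ℚ_[2] K] {γ₁ γ₂ : K} {q : ℚ_[2]} (hq : ‖γ₁ + γ₂‖ ^ 2 = ‖q‖)
    (hγ₁ : ‖γ₁‖ ^ 4 = 2⁻¹) (hγ₂ : ‖γ₂‖ ^ 4 = 2⁻¹) :
    ‖γ₂ - γ₁‖ ^ 4 = 2 ^ (-2 : ℤ) ∨ ‖γ₂ - γ₁‖ ^ 4 = 2 ^ (-4 : ℤ) ∨
      ‖γ₂ - γ₁‖ ^ 4 = 2 ^ (-5 : ℤ) := by
  have hγ : ‖γ₁‖ = ‖γ₂‖ :=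
    (pow_left_inj₀ (norm_nonneg _) (norm_nonneg _) four_ne_zero).1 (hγ₁.trans hγ₂.symm)
  have hsum : ‖γ₁ + γ₂‖ ^ 4 ≤ 2⁻¹ := by
    rw [← hγ₁]
    gcongr
    simpa [hγ] using IsUltrametricDist.norm_add_le_max γ₁ γ₂
  have hprod : ‖4 * (γ₁ * γ₂)‖ ^ 2 = 2 ^ (-5 : ℤ) := by
    rw [← map_ofNat (algebraMap ℚ_[2] K), norm_mul, norm_mul, norm_algebraMap',
      show (4 : ℚ_[2]) = 2 ^ 2 by norm_num, norm_pow,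
      show ‖(2 : ℚ_[2])‖ = 2⁻¹ by exact_mod_cast Padic.norm_p (p := 2), ← hγ]
    linear_combination (1 / 16 : ℝ) * hγ₁
  have h := sq_norm_sq_sub_eq_two_zpow hq hsum hprod
  rwa [show (γ₁ + γ₂) ^ 2 - 4 * (γ₁ * γ₂) = (γ₂ - γ₁) ^ 2 by ring, norm_pow, ← pow_mul] at h

theorem stmt_8_general
    {K : Type*} [NormedField K] [IsUltrametricDist K]
    [Algebra ℚ_[2] K] [Algebra ℤ_[2] K] [IsScalarTower ℤ_[2] ℚ_[2] K]
    [IsAlgClosure ℚ_[2] K]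
    (hK : ∀ x : ℚ_[2], ‖algebraMap ℚ_[2] K x‖ = ‖x‖)
    (f : PowerSeries ℤ_[2])
    (hf0 : PowerSeries.coeff 0 f = 0)
    -- Weierstrass degree of `f` is `2`
    (hw2 : IsUnit (PowerSeries.coeff 2 f))
    -- `α` is the nonzero root of `f`, of valuation `1`
    (α : K) (hα0 : α ≠ 0) (hαm : ‖α‖ < 1) (hαroot : evalT f α = 0)
    -- `β, β'` are the two roots of `f(x) - α`, of valuation `1/2`
    (β β' : K) (hββ' : β ≠ β') (hβm : ‖β‖ < 1) (hβ'm : ‖β'‖ < 1)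
    (hβ : evalT f β = α) (hβ' : evalT f β' = α)
    -- `γ₁, γ₂` are the two roots of `f(x) - β` (the roots of the Eisenstein quadratic
    -- over `Z_2[β]` from the Weierstrass factorization of `f(x) - β`), of valuation `1/4`
    (γ₁ γ₂ : K) (hγγ : γ₁ ≠ γ₂) (hγ₁m : ‖γ₁‖ < 1) (hγ₂m : ‖γ₂‖ < 1)
    (hγ₁ : evalT f γ₁ = β) (hγ₂ : evalT f γ₂ = β)
    (hγ₁v : ‖γ₁‖ ^ 4 = (2 : ℝ)⁻¹) (hγ₂v : ‖γ₂‖ ^ 4 = (2 : ℝ)⁻¹) :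
    -- `v_2(γ₂ - γ₁) ∈ {1/2, 1, 5/4}`
    ‖γ₂ - γ₁‖ ^ 4 = (2 : ℝ) ^ (-2 : ℤ) ∨ ‖γ₂ - γ₁‖ ^ 4 = (2 : ℝ) ^ (-4 : ℤ) ∨
      ‖γ₂ - γ₁‖ ^ 4 = (2 : ℝ) ^ (-5 : ℤ) := by
  let _ : NormedAlgebra ℚ_[2] K :=
    { norm_smul_le := fun c x => by rw [Algebra.smul_def, norm_mul, hK] }
  have hσα : ∀ σ : K ≃ₐ[ℚ_[2]] K, σ α = α := fun σ =>
    (algEquiv_apply_eq_or_eq_of_evalT_eq f hw2 (norm_zero.trans_lt one_pos) hαm hαm hα0.symm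
      (by rw [evalT_zero, hf0, map_zero]) hαroot hαroot σ (map_zero σ)).resolve_left
      fun h => hα0 (σ.injective (h.trans (map_zero σ).symm))
  have hσβ : ∀ σ : K ≃ₐ[ℚ_[2]] K, σ β = β ∨ σ β = β' := fun σ =>
    algEquiv_apply_eq_or_eq_of_evalT_eq f hw2 hβm hβ'm hβm hββ' hβ hβ' hβ σ (hσα σ)
  obtain ⟨s', hs'⟩ := exists_forall_algEquiv_apply_eq_or_eq hσβ
    (algEquiv_add_eq_of_evalT_eq f hw2 hγ₁m hγ₂m hγγ hγ₁ hγ₂)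
  obtain ⟨q, hq⟩ := exists_norm_sq_eq_norm_padic hs'
  exact norm_sub_pow_four_eq_two_zpow hq hγ₁v hγ₂v

/-- p = 2. -/
theorem stmt_8
    {K : Type*} [NormedField K] [IsUltrametricDist K]
    [Algebra ℚ_[2] K] [Algebra ℤ_[2] K] [IsScalarTower ℤ_[2] ℚ_[2] K]
    [IsAlgClosure ℚ_[2] K]
    (hK : ∀ x : ℚ_[2], ‖algebraMap ℚ_[2] K x‖ = ‖x‖)
    (f u : PowerSeries ℤ_[2])
    (hf0 : PowerSeries.coeff 0 f = 0) (hu0 : PowerSeries.coeff 0 u = 0)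
    (hcomm : compPS f u = compPS u f)
    (huinv : IsUnit (PowerSeries.coeff 1 u))
    (hunt : ∀ n : ℕ, 0 < n → iterPS u n ≠ PowerSeries.X)
    -- Weierstrass degree of `f` is `2`
    (hw2 : IsUnit (PowerSeries.coeff 2 f))
    (hwlt : ∀ i < 2, ¬ IsUnit (PowerSeries.coeff i f))
    -- `v_2(f'(0)) = 1`
    (hvf : ‖PowerSeries.coeff 1 f‖ = (2 : ℝ)⁻¹)
    -- `v_2(u'(0) - 1) = 2`
    (hvu : ‖PowerSeries.coeff 1 u - 1‖ = (4 : ℝ)⁻¹)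
    -- `α` is the nonzero root of `f`, of valuation `1`
    (α : K) (hα0 : α ≠ 0) (hαm : ‖α‖ < 1) (hαroot : evalT f α = 0)
    (hαv : ‖α‖ = (2 : ℝ)⁻¹)
    -- `β, β'` are the two roots of `f(x) - α`, of valuation `1/2`
    (β β' : K) (hββ' : β ≠ β') (hβm : ‖β‖ < 1) (hβ'm : ‖β'‖ < 1)
    (hβ : evalT f β = α) (hβ' : evalT f β' = α)
    (hβv : ‖β‖ ^ 2 = (2 : ℝ)⁻¹)
    -- `γ₁, γ₂` are the two roots of `f(x) - β` (the roots of the Eisenstein quadratic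
    -- over `Z_2[β]` from the Weierstrass factorization of `f(x) - β`), of valuation `1/4`
    (γ₁ γ₂ : K) (hγγ : γ₁ ≠ γ₂) (hγ₁m : ‖γ₁‖ < 1) (hγ₂m : ‖γ₂‖ < 1)
    (hγ₁ : evalT f γ₁ = β) (hγ₂ : evalT f γ₂ = β)
    (hγ₁v : ‖γ₁‖ ^ 4 = (2 : ℝ)⁻¹) (hγ₂v : ‖γ₂‖ ^ 4 = (2 : ℝ)⁻¹) :
    -- `v_2(γ₂ - γ₁) ∈ {1/2, 1, 5/4}`
    ‖γ₂ - γ₁‖ ^ 4 = (2 : ℝ) ^ (-2 : ℤ) ∨ ‖γ₂ - γ₁‖ ^ 4 = (2 : ℝ) ^ (-4 : ℤ) ∨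
      ‖γ₂ - γ₁‖ ^ 4 = (2 : ℝ) ^ (-5 : ℤ) :=
  stmt_8_general hK f hf0 hw2 α hα0 hαm hαroot β β' hββ' hβm hβ'm hβ hβ' γ₁ γ₂ hγγ hγ₁m hγ₂m hγ₁ hγ₂
    hγ₁v hγ₂v

end
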